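/- Let p be a prime and let Γ be a nontrivial linearly ordered abelian group. Then Γ is p-antiregular if and only if for every γ ∈ Γ there exists δ ∈ Γ such that for all ε ∈ Γ with |ε| ≤ p·|γ| one has δ + ε ∉ pΓ. (Here |γ| = max{γ, −γ}.) -/

import Mathlib

/-!
Convex subgroups are read off through Archimedean classes. If `Γ` is `p`-antiregular, every `γ`
lies in a proper convex subgroup `Δ`: the elements infinitesimal with respect to `γ` form a proper
convex subgroup, and it cannot be maximal since `Γ` has no rank-one quotient. Any `δ ∉ pΓ + Δ`
then works, because `|ε| ≤ p • |γ|` forces `ε ∈ Δ`. Conversely, given `γ` outside a proper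
convex subgroup `Δ`, the witness `δ` for `γ` lies outside `pΓ + Δ`, since every element of `Δ` is
smaller than `|γ|`; and if `Γ/Δ` had rank one, `γ` would be cofinal in `Γ`, so division with
remainder by `p • |γ|` would write `δ = p • y - ε` with `|ε| ≤ p • |γ|`.
-/

/-- A subgroup `Δ` of a linearly ordered abelian group `Γ` is convex if whenever
`0 ≤ β ≤ δ` and `δ ∈ Δ`, then `β ∈ Δ`. -/
def IsConvexAddSubgroup {Γ : Type*} [AddCommGroup Γ] [LinearOrder Γ] [IsOrderedAddMonoid Γ] (Δ : AddSubgroup Γ) : Prop :=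
  ∀ β δ : Γ, 0 ≤ β → β ≤ δ → δ ∈ Δ → β ∈ Δ

/-- The quotient `Γ/Δ` of `Γ` by the (convex) subgroup `Δ` is `p`-divisible:
for every `γ ∈ Γ` there are `ε ∈ Γ` and `δ ∈ Δ` with `γ = p • ε + δ`. -/
def QuotPDivisible {Γ : Type*} [AddCommGroup Γ] [LinearOrder Γ] [IsOrderedAddMonoid Γ] (p : ℕ) (Δ : AddSubgroup Γ) :
    Prop :=
  ∀ γ : Γ, ∃ ε : Γ, ∃ δ ∈ Δ, γ = p • ε + δ

/-- The quotient `Γ/Δ` has rank `1`: `Δ ≠ Γ` and there is no convex subgroup strictly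
between `Δ` and `Γ`. -/
def QuotRankOne {Γ : Type*} [AddCommGroup Γ] [LinearOrder Γ] [IsOrderedAddMonoid Γ] (Δ : AddSubgroup Γ) : Prop :=
  Δ ≠ ⊤ ∧ ∀ Δ' : AddSubgroup Γ, IsConvexAddSubgroup Δ' → Δ < Δ' → Δ' = ⊤

/-- A linearly ordered abelian group `Γ` is `p`-antiregular if `Γ/Δ` is not `p`-divisible for
every convex subgroup `Δ ≠ Γ`, and no quotient of `Γ` by a convex subgroup has rank `1`. -/
def IsPAntiregular (p : ℕ) (Γ : Type*) [AddCommGroup Γ] [LinearOrder Γ] [IsOrderedAddMonoid Γ] : Prop :=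
  (∀ Δ : AddSubgroup Γ, IsConvexAddSubgroup Δ → Δ ≠ ⊤ → ¬ QuotPDivisible p Δ) ∧
  (∀ Δ : AddSubgroup Γ, IsConvexAddSubgroup Δ → ¬ QuotRankOne Δ)

open ArchimedeanClass

section ConvexSubgroups

variable {Γ : Type*} [AddCommGroup Γ] [LinearOrder Γ] [IsOrderedAddMonoid Γ]

namespace IsConvexAddSubgroup

theorem mem_of_abs_le {Δ : AddSubgroup Γ} (hΔ : IsConvexAddSubgroup Δ) {x y : Γ}
    (hxy : |x| ≤ |y|) (hy : y ∈ Δ) : x ∈ Δ :=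
  abs_mem_iff.mp (hΔ _ _ (abs_nonneg x) hxy (abs_mem_iff.mpr hy))

theorem bot : IsConvexAddSubgroup (⊥ : AddSubgroup Γ) := by
  intro β δ hβ hβδ hδ
  rw [AddSubgroup.mem_bot] at hδ ⊢
  exact le_antisymm (hδ ▸ hβδ) hβ

theorem archimedeanClass_addSubgroup (s : UpperSet (ArchimedeanClass Γ)) :
    IsConvexAddSubgroup (ArchimedeanClass.addSubgroup s) := by
  obtain rfl | hs := eq_or_ne s ⊤
  · rw [addSubgroup_eq_bot]
    exact bot
  intro β δ hβ hβδ hδ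
  rw [mem_addSubgroup_iff hs] at hδ ⊢
  refine s.upper (mk_le_mk_of_abs ?_) hδ
  rwa [abs_of_nonneg hβ, abs_of_nonneg (hβ.trans hβδ)]

end IsConvexAddSubgroup

/-- The convex subgroup of elements infinitesimal with respect to `γ ≠ 0` is proper, hence not
maximal among proper convex subgroups. -/
theorem exists_isConvexAddSubgroup_ne_top_mem [Nontrivial Γ]
    (hrank : ∀ Δ : AddSubgroup Γ, IsConvexAddSubgroup Δ → ¬ QuotRankOne Δ) (γ : Γ) :
    ∃ Δ : AddSubgroup Γ, IsConvexAddSubgroup Δ ∧ Δ ≠ ⊤ ∧ γ ∈ Δ := by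
  obtain rfl | hγ := eq_or_ne γ 0
  · exact ⟨⊥, .bot, bot_ne_top, zero_mem _⟩
  have hγ_top : mk γ ≠ ⊤ := mk_eq_top_iff.not.mpr hγ
  have hγ_not_mem : γ ∉ ballAddSubgroup (mk γ) := by
    rw [mem_ballAddSubgroup_iff hγ_top]
    exact lt_irrefl _
  have hball_rank :=
    hrank _ (IsConvexAddSubgroup.archimedeanClass_addSubgroup (UpperSet.Ioi (mk γ)))
  simp only [QuotRankOne, not_and, not_forall] at hball_rank
  obtain ⟨Δ, hΔ, hlt, hΔ_top⟩ := hball_rank fun h ↦ hγ_not_mem <| by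
    rw [ballAddSubgroup, h]
    exact AddSubgroup.mem_top γ
  obtain ⟨x, hxΔ, hx⟩ := SetLike.exists_of_lt hlt
  rw [mem_ballAddSubgroup_iff hγ_top, not_lt, mk_le_mk] at hx
  obtain ⟨n, hn⟩ := hx
  refine ⟨Δ, hΔ, hΔ_top, hΔ.mem_of_abs_le ?_ (nsmul_mem hxΔ n)⟩
  rwa [abs_nsmul]

/-- `closedBallAddSubgroup (mk γ)` is a convex subgroup strictly containing `Δ`. -/
theorem QuotRankOne.mk_le_mk {Δ : AddSubgroup Γ} (hΔ : IsConvexAddSubgroup Δ)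
    (hrank : QuotRankOne Δ) {γ : Γ} (hγ : γ ∉ Δ) (x : Γ) : mk γ ≤ mk x := by
  have hle : Δ ≤ closedBallAddSubgroup (mk γ) := by
    intro d hd
    rw [mem_closedBallAddSubgroup_iff]
    by_contra! hlt
    exact hγ (hΔ.mem_of_abs_le (by simpa using (mk_lt_mk.mp hlt 1).le) hd)
  have hγ_mem : γ ∈ closedBallAddSubgroup (mk γ) := mem_closedBallAddSubgroup_iff.mpr le_rfl
  have htop := hrank.2 _ (IsConvexAddSubgroup.archimedeanClass_addSubgroup _)
    (lt_of_le_of_ne hle fun h ↦ hγ (h ▸ hγ_mem))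
  rw [← mem_closedBallAddSubgroup_iff, closedBallAddSubgroup, htop]
  exact AddSubgroup.mem_top x

theorem exists_zsmul_le_lt_add_one_zsmul {g : Γ} (hg : 0 < g) (hcof : ∀ x, mk g ≤ mk x) (δ : Γ) :
    ∃ q : ℤ, q • g ≤ δ ∧ δ < (q + 1) • g := by
  obtain ⟨n, hn⟩ := mk_le_mk.mp (hcof δ)
  rw [abs_of_pos hg] at hn
  have hbdd : ∃ b : ℤ, ∀ z : ℤ, z • g ≤ δ → z ≤ b := by
    refine ⟨n, fun z hz ↦ (zsmul_le_zsmul_iff_left hg).mp ?_⟩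
    rw [natCast_zsmul]
    exact hz.trans ((le_abs_self δ).trans hn)
  have hinh : ∃ z : ℤ, z • g ≤ δ := by
    refine ⟨-n, ?_⟩
    rw [neg_zsmul, natCast_zsmul]
    exact neg_le_of_neg_le ((neg_le_abs δ).trans hn)
  obtain ⟨q, hq, hq_max⟩ := Int.exists_greatest_of_bdd hbdd hinh
  exact ⟨q, hq, lt_of_not_ge fun h ↦ by linarith [hq_max _ h]⟩

end ConvexSubgroups

section PMultiples

variable {p : ℕ} {Γ : Type*} [AddCommGroup Γ] [LinearOrder Γ] [IsOrderedAddMonoid Γ]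

theorem IsPAntiregular.exists_forall_add_ne_nsmul [Nontrivial Γ] (h : IsPAntiregular p Γ)
    (γ : Γ) : ∃ δ : Γ, ∀ ε : Γ, |ε| ≤ p • |γ| → ∀ y : Γ, δ + ε ≠ p • y := by
  obtain ⟨Δ, hΔ, hΔ_top, hγ⟩ := exists_isConvexAddSubgroup_ne_top_mem h.2 γ
  have hdiv := h.1 Δ hΔ hΔ_top
  simp only [QuotPDivisible, not_forall, not_exists, not_and] at hdiv
  obtain ⟨δ, hδ⟩ := hdiv
  refine ⟨δ, fun ε hε y hy ↦ hδ y (-ε) (neg_mem ?_) (eq_add_neg_of_add_eq hy)⟩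
  exact hΔ.mem_of_abs_le (by rwa [abs_nsmul]) (nsmul_mem hγ p)

/-- An element outside `Δ` dominates every element of `Δ`, so a witness `δ` for it cannot be
corrected into `pΓ` by an element of `Δ`. -/
theorem not_quotPDivisible_of_forall_add_ne_nsmul (hp : p ≠ 0) {Δ : AddSubgroup Γ}
    (hΔ : IsConvexAddSubgroup Δ) {γ δ : Γ} (hγ : γ ∉ Δ)
    (hδ : ∀ ε : Γ, |ε| ≤ p • |γ| → ∀ y : Γ, δ + ε ≠ p • y) : ¬ QuotPDivisible p Δ := by
  intro hdiv
  obtain ⟨y, d, hd, rfl⟩ := hdiv δ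
  have hd_le : |d| ≤ |γ| := le_of_not_ge fun h ↦ hγ (hΔ.mem_of_abs_le h hd)
  refine hδ (-d) ?_ y (by abel)
  rw [abs_neg]
  exact hd_le.trans (le_self_nsmul (abs_nonneg γ) hp)

/-- Division with remainder by `p • |γ|`, which is possible because `γ` is cofinal. -/
theorem QuotRankOne.exists_add_eq_nsmul (hp : p ≠ 0) {Δ : AddSubgroup Γ}
    (hΔ : IsConvexAddSubgroup Δ) (hrank : QuotRankOne Δ) {γ : Γ} (hγ : γ ∉ Δ) (δ : Γ) :
    ∃ ε : Γ, |ε| ≤ p • |γ| ∧ ∃ y : Γ, δ + ε = p • y := by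
  have hγ_le : |γ| ≤ p • |γ| := le_self_nsmul (abs_nonneg γ) hp
  have hg : 0 < p • |γ| :=
    (abs_pos.mpr (ne_of_mem_of_not_mem (zero_mem Δ) hγ).symm).trans_le hγ_le
  have hcof (x : Γ) : mk (p • |γ|) ≤ mk x :=
    (mk_le_mk_of_abs (by rwa [abs_abs, abs_of_pos hg])).trans (mk_abs γ ▸ hrank.mk_le_mk hΔ hγ x)
  obtain ⟨q, hq, hq_lt⟩ := exists_zsmul_le_lt_add_one_zsmul hg hcof δ
  rw [add_one_zsmul] at hq_lt
  refine ⟨q • (p • |γ|) - δ, abs_le.mpr ⟨neg_le_sub_iff_le_add.mpr hq_lt.le,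
    (sub_nonpos.mpr hq).trans hg.le⟩, q • |γ|, ?_⟩
  rw [smul_comm]
  abel

end PMultiples

/-- first-order characterization of `p`-antiregularity.
Let `p` be a prime and `Γ` a nontrivial linearly ordered abelian group. Then `Γ` is
`p`-antiregular iff for every `γ ∈ Γ` there exists `δ ∈ Γ` such that for every `ε ∈ Γ` with
`|ε| ≤ p • |γ|` one has `δ + ε ∉ pΓ`. -/
theorem pAntiregular_iff_firstOrder (p : ℕ) (hp : p.Prime)
    (Γ : Type*) [AddCommGroup Γ] [LinearOrder Γ] [IsOrderedAddMonoid Γ] [Nontrivial Γ] :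
    IsPAntiregular p Γ ↔
      ∀ γ : Γ, ∃ δ : Γ, ∀ ε : Γ, |ε| ≤ p • |γ| → ∀ y : Γ, δ + ε ≠ p • y := by
  refine ⟨fun h ↦ h.exists_forall_add_ne_nsmul, fun H ↦ ⟨fun Δ hΔ hΔ_top ↦ ?_, fun Δ hΔ hrank ↦ ?_⟩⟩
  · obtain ⟨γ, hγ⟩ := SetLike.exists_not_mem_of_ne_top Δ hΔ_top rfl
    obtain ⟨δ, hδ⟩ := H γ
    exact not_quotPDivisible_of_forall_add_ne_nsmul hp.ne_zero hΔ hγ hδ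
  · obtain ⟨γ, hγ⟩ := SetLike.exists_not_mem_of_ne_top Δ hrank.1 rfl
    obtain ⟨δ, hδ⟩ := H γ
    obtain ⟨ε, hε, y, hy⟩ := hrank.exists_add_eq_nsmul hp.ne_zero hΔ hγ δ
    exact hδ ε hε y hy
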